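/- arXiv:1209.2847 — 3 statements merged into one kernel-verified Lean document; each statement's English description precedes it below -/
import Mathlib

section
/- Given a Schreier system (M, A, Θ, λ), the set ∪_{a∈M} A_a with multiplication (f,a)(g,b) = (a_*(f) ∘ b^*(g), ab) is an associative monoid with unit (1,1). -/
/-- Transport along an equality of indices of an indexed family. -/
def fcast {M : Type*} (A : M → Type*) {x y : M} (h : x = y) (v : A x) : A y := h ▸ v

/-- The Grothendieck-style multiplication on `⋃_{a ∈ M} A_a`:
`(f,a)·(g,b) = (a_*(g) ∘ b^*(f), ab)`. -/
def sMul {M : Type*} [Monoid M] (A : M → Type*) [∀ a : M, Group (A a)]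
    (push : ∀ a b : M, A b →* A (a * b)) (pull : ∀ a b : M, A a →* A (a * b))
    (x y : Σ a : M, A a) : Σ a : M, A a :=
  ⟨x.1 * y.1, push x.1 y.1 y.2 * pull x.1 y.1 x.2⟩

lemma fcast_mul {M : Type*} (A : M → Type*) [∀ a : M, Group (A a)] {x y : M}
    (h : x = y) (u v : A x) : fcast A h (u * v) = fcast A h u * fcast A h v := by
  subst h; rfl

lemma sigma_fcast_eq {M : Type*} (A : M → Type*) {x y : M} (h : x = y) (v : A x) :
    (⟨y, fcast A h v⟩ : Σ a : M, A a) = ⟨x, v⟩ := by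
  subst h; rfl

/-- Given a Schreier system with trivial `λ` (so that `(ab)_* = a_* b_*`,
`c^* a_* = a_* c^*`, `c^* b^* = (bc)^*` hold on the nose), the set
`⋃_{a ∈ M} A_a` with the multiplication above is an associative monoid with
unit `(1,1)`. -/
theorem stmt2 {M : Type*} [Monoid M] (A : M → Type*) [∀ a : M, Group (A a)]
    (push : ∀ a b : M, A b →* A (a * b))   -- `a_* : A_b → A_{ab}`
    (pull : ∀ a b : M, A a →* A (a * b))   -- `b^* : A_a → A_{ab}`
    (h1 : ∀ (a b c : M) (f : A c),
      push (a * b) c f = fcast A (mul_assoc a b c).symm (push a (b * c) (push b c f)))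
    (h2 : ∀ (a b c : M) (g : A b),
      pull (a * b) c (push a b g) = fcast A (mul_assoc a b c).symm (push a (b * c) (pull b c g)))
    (h3 : ∀ (a b c : M) (h : A a),
      pull (a * b) c (pull a b h) = fcast A (mul_assoc a b c).symm (pull a (b * c) h))
    (hc : ∀ (a b : M) (f : A b) (g : A a),
      push a b f * pull a b g = pull a b g * push a b f)
    (hn1 : ∀ (a : M) (f : A a), push 1 a f = fcast A (one_mul a).symm f)
    (hn2 : ∀ (a : M) (f : A a), pull a 1 f = fcast A (mul_one a).symm f) :
    (∀ x y z : Σ a : M, A a,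
        sMul A push pull (sMul A push pull x y) z = sMul A push pull x (sMul A push pull y z))
    ∧ (∀ x : Σ a : M, A a, sMul A push pull ⟨1, 1⟩ x = x)
    ∧ (∀ x : Σ a : M, A a, sMul A push pull x ⟨1, 1⟩ = x) := by
  refine ⟨?_, ?_, ?_⟩
  · rintro ⟨a, f⟩ ⟨b, g⟩ ⟨c, k⟩
    show (⟨a * b * c, push (a*b) c k * pull (a*b) c (push a b g * pull a b f)⟩ : Σ a : M, A a)
      = ⟨a * (b * c), push a (b*c) (push b c k * pull b c g) * pull a (b*c) f⟩
    rw [map_mul, h1, h2, h3, map_mul, ← fcast_mul, ← fcast_mul, sigma_fcast_eq, mul_assoc]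
  · rintro ⟨a, f⟩
    show (⟨1 * a, push 1 a f * pull 1 a 1⟩ : Σ a : M, A a) = ⟨a, f⟩
    rw [map_one, mul_one, hn1, sigma_fcast_eq]
  · rintro ⟨a, f⟩
    show (⟨a * 1, push a 1 1 * pull a 1 f⟩ : Σ a : M, A a) = ⟨a, f⟩
    rw [map_one, one_mul, hn2, sigma_fcast_eq]
end

section
/- Given a Schreier system (M, A, Θ, λ) with all λ_{a,b,c} = 1, the fiberwise group multiplication map ((f,a),(g,a)) ↦ (f∘g, a) is a monoid homomorphism from the fiber product ∪A_a ×_M ∪A_a to ∪A_a, where ∪A_a carries the multiplication (f,a)(g,b) = (a_*(f)∘b^*(g), ab). -/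
/-- The fiber product `⋃A_a ×_M ⋃A_a` of the projection to `M` with itself. -/
def FProd {M : Type*} (A : M → Type*) : Type _ :=
  { p : (Σ a : M, A a) × (Σ a : M, A a) // p.1.1 = p.2.1 }

/-- Componentwise multiplication on the fiber product. -/
def fMul {M : Type*} [Monoid M] (A : M → Type*) [∀ a : M, Group (A a)]
    (push : ∀ a b : M, A b →* A (a * b)) (pull : ∀ a b : M, A a →* A (a * b))
    (x y : FProd A) : FProd A :=
  ⟨(sMul A push pull x.1.1 y.1.1, sMul A push pull x.1.2 y.1.2), by
    show x.1.1.1 * y.1.1.1 = x.1.2.1 * y.1.2.1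
    rw [x.2, y.2]⟩

/-- The fiberwise group multiplication `((f,a),(g,a)) ↦ (f·g, a)`. -/
def fibMul {M : Type*} [Monoid M] (A : M → Type*) [∀ a : M, Group (A a)]
    (x : FProd A) : Σ a : M, A a :=
  ⟨x.1.1.1, x.1.1.2 * fcast A x.2.symm x.1.2.2⟩

/-!
Over `ab`, the image of `((f,a),(f',a)) · ((g,b),(g',b))` is
`a_*(g) b^*(f) a_*(g') b^*(f')`, while the product of the images is
`a_*(g g') b^*(f f') = a_*(g) a_*(g') b^*(f) b^*(f')`; the two differ by swapping the middle
factors `b^*(f)` and `a_*(g')`, which is exactly the centralizing condition.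
-/

section FiberwiseMultiplication

variable {M : Type*} [Monoid M] (A : M → Type*) [∀ a : M, Group (A a)]

theorem fibMul_mk (a : M) (f g : A a) :
    fibMul A ⟨(⟨a, f⟩, ⟨a, g⟩), rfl⟩ = ⟨a, f * g⟩ :=
  rfl

theorem fibMul_fMul (push : ∀ a b : M, A b →* A (a * b))
    (pull : ∀ a b : M, A a →* A (a * b))
    (hc : ∀ (a b : M) (f : A b) (g : A a), push a b f * pull a b g = pull a b g * push a b f)
    (x y : FProd A) :
    fibMul A (fMul A push pull x y) = sMul A push pull (fibMul A x) (fibMul A y) := by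
  obtain ⟨⟨⟨a, f⟩, ⟨a', f'⟩⟩, hx⟩ := x
  obtain ⟨⟨⟨b, g⟩, ⟨b', g'⟩⟩, hy⟩ := y
  dsimp only at hx hy
  subst hx hy
  change Sigma.mk (a * b) (push a b g * pull a b f * (push a b g' * pull a b f'))
    = ⟨a * b, push a b (g * g') * pull a b (f * f')⟩
  rw [map_mul, map_mul, Commute.mul_mul_mul_comm (hc a b g' f).symm]

theorem fibMul_one : fibMul A ⟨(⟨(1 : M), 1⟩, ⟨1, 1⟩), rfl⟩ = ⟨1, 1⟩ := by
  rw [fibMul_mk, mul_one]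

end FiberwiseMultiplication

/-- For a Schreier system with trivial `λ`, the fiberwise group multiplication
is a monoid homomorphism from the fiber product `⋃A_a ×_M ⋃A_a` (with
componentwise multiplication) to `⋃A_a` with the multiplication
`(f,a)(g,b) = (a_*(g) ∘ b^*(f), ab)`. -/
theorem stmt3 {M : Type*} [Monoid M] (A : M → Type*) [∀ a : M, Group (A a)]
    (push : ∀ a b : M, A b →* A (a * b))   -- `a_* : A_b → A_{ab}`
    (pull : ∀ a b : M, A a →* A (a * b))   -- `b^* : A_a → A_{ab}`
    (h1 : ∀ (a b c : M) (f : A c),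
      push (a * b) c f = fcast A (mul_assoc a b c).symm (push a (b * c) (push b c f)))
    (h2 : ∀ (a b c : M) (g : A b),
      pull (a * b) c (push a b g) = fcast A (mul_assoc a b c).symm (push a (b * c) (pull b c g)))
    (h3 : ∀ (a b c : M) (h : A a),
      pull (a * b) c (pull a b h) = fcast A (mul_assoc a b c).symm (pull a (b * c) h))
    (hc : ∀ (a b : M) (f : A b) (g : A a),
      push a b f * pull a b g = pull a b g * push a b f)
    (hn1 : ∀ (a : M) (f : A a), push 1 a f = fcast A (one_mul a).symm f)
    (hn2 : ∀ (a : M) (f : A a), pull a 1 f = fcast A (mul_one a).symm f) :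
    (∀ x y : FProd A,
        fibMul A (fMul A push pull x y)
          = sMul A push pull (fibMul A x) (fibMul A y))
    ∧ fibMul A ⟨(⟨1, 1⟩, ⟨1, 1⟩), rfl⟩ = ⟨1, 1⟩ :=
  ⟨fibMul_fMul A push pull hc, fibMul_one A⟩
end

section
/- Let G be a group, and let (A,Θ) be a DG-module in which each a^* : A_1 → A_a is an isomorphism. Define θ : G → Aut(A_1) by a^*∘θ(a) = a_*, and for λ ∈ Z^3 of the Leech complex define λ̂ by (abc)^*(λ̂_{a,b,c}) = λ_{a,b,c}. Then λ̂ is a normalized Eilenberg–Mac Lane 3-cocycle of G with coefficients in the G-module (A_1, θ): θ(a)(λ̂_{b,c,d}) · λ̂_{a,bc,d} · λ̂_{a,b,c} = λ̂_{a,b,cd} · λ̂_{ab,c,d} for all a,b,c,d ∈ G. -/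
/-- Let `G` be a group and `(A,Θ)` a `𝔻G`-module.  Define `θ : G → Aut(A_1)` by
`a^* ∘ θ(a) = a_*`, and for a normalized Leech 3-cocycle `λ` define `λ̂` by
`(abc)^*(λ̂_{a,b,c}) = λ_{a,b,c}`.  Then `λ̂` is a normalized Eilenberg–Mac Lane
3-cocycle of `G` with coefficients in the `G`-module `(A_1, θ)`:
`θ(a)(λ̂_{b,c,d}) · λ̂_{a,bc,d} · λ̂_{a,b,c} = λ̂_{a,b,cd} · λ̂_{ab,c,d}`. -/
theorem stmt19 {G : Type*} [Group G] (A : G → Type*) [∀ a : G, CommGroup (A a)]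
    (push : ∀ a b : G, A b →* A (a * b))   -- `a_* : A_b → A_{ab}`
    (pull : ∀ a b : G, A a →* A (a * b))   -- `b^* : A_a → A_{ab}`
    (h1 : ∀ (a b c : G) (f : A c),
      push (a * b) c f = fcast A (mul_assoc a b c).symm (push a (b * c) (push b c f)))
    (h2 : ∀ (a b c : G) (g : A b),
      pull (a * b) c (push a b g) = fcast A (mul_assoc a b c).symm (push a (b * c) (pull b c g)))
    (h3 : ∀ (a b c : G) (h : A a),
      pull (a * b) c (pull a b h) = fcast A (mul_assoc a b c).symm (pull a (b * c) h))
    (hn1 : ∀ (a : G) (f : A a), push 1 a f = fcast A (one_mul a).symm f)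
    (hn2 : ∀ (a : G) (f : A a), pull a 1 f = fcast A (mul_one a).symm f)
    -- a normalized Leech 3-cocycle `λ`:
    (lam : ∀ a b c : G, A (a * b * c))
    (hcoc : ∀ a b c d : G,
      fcast A (show a * (b * c * d) = a * b * c * d by simp [mul_assoc])
          (push a (b * c * d) (lam b c d))
        * fcast A (show a * (b * c) * d = a * b * c * d by simp [mul_assoc])
          (lam a (b * c) d)
        * pull (a * b * c) d (lam a b c)
      = fcast A (show a * b * (c * d) = a * b * c * d by simp [mul_assoc])
          (lam a b (c * d))
        * lam (a * b) c d)
    (hnormlam : ∀ a b c : G, a = 1 ∨ b = 1 ∨ c = 1 → lam a b c = 1)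
    -- `θ : G → Aut(A_1)` defined by `a^* ∘ θ(a) = a_*`:
    (θ : G → A (1 : G) → A (1 : G))
    (hθ : ∀ (a : G) (f : A (1 : G)),
      fcast A (one_mul a) (pull 1 a (θ a f)) = fcast A (mul_one a) (push a 1 f))
    -- `λ̂` defined by `(abc)^*(λ̂_{a,b,c}) = λ_{a,b,c}`:
    (lamhat : G → G → G → A (1 : G))
    (hlamhat : ∀ a b c : G,
      fcast A (one_mul (a * b * c)) (pull 1 (a * b * c) (lamhat a b c)) = lam a b c) :
    (∀ a b c d : G,
      θ a (lamhat b c d) * lamhat a (b * c) d * lamhat a b c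
        = lamhat a b (c * d) * lamhat (a * b) c d)
    ∧ (∀ a b c : G, a = 1 ∨ b = 1 ∨ c = 1 → lamhat a b c = 1) := by
  -- basic HEq toolkit
  have hcast : ∀ {x y : G} (h : x = y) (v : A x), HEq (fcast A h v) v := by
    intro x y h v; subst h; rfl
  have hcinj : ∀ {x y : G} (h : x = y) (u v : A x),
      fcast A h u = fcast A h v → u = v := by
    intro x y h u v hh; subst h; exact hh
  have hpull2 : ∀ (a : G) {s t : G} (_ : s = t) (f : A a),
      HEq (pull a s f) (pull a t f) := by
    intro a s t h f; subst h; rfl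
  have hpullc : ∀ (c : G) {s t : G} (_ : s = t) (u : A s) (v : A t),
      HEq u v → HEq (pull s c u) (pull t c v) := by
    intro c s t h u v huv; subst h; rw [eq_of_heq huv]
  have hpushc : ∀ (a : G) {s t : G} (_ : s = t) (u : A s) (v : A t),
      HEq u v → HEq (push a s u) (push a t v) := by
    intro a s t h u v huv; subst h; rw [eq_of_heq huv]
  have hmulc : ∀ {s t : G} (_ : s = t) (u u' : A s) (v v' : A t),
      HEq u v → HEq u' v' → HEq (u * u') (v * v') := by
    intro s t h u u' v v' h1 h2; subst h; rw [eq_of_heq h1, eq_of_heq h2]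
  have honec : ∀ {s t : G} (_ : s = t), HEq (1 : A s) (1 : A t) := by
    intro s t h; subst h; rfl
  -- injectivity of pull 1 x
  have pinj : ∀ (x : G), Function.Injective (pull 1 x) := by
    intro x u v huv
    have e := congrArg (pull (1 * x) x⁻¹) huv
    rw [h3 1 x x⁻¹ u, h3 1 x x⁻¹ v] at e
    have e2 := hcinj _ _ _ e
    have hu : HEq (pull 1 (x * x⁻¹) u) u := by
      refine HEq.trans (hpull2 1 (mul_inv_cancel x) u) ?_
      exact (heq_of_eq (hn2 1 u)).trans (hcast _ _)
    have hv : HEq (pull 1 (x * x⁻¹) v) v := by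
      refine HEq.trans (hpull2 1 (mul_inv_cancel x) v) ?_
      exact (heq_of_eq (hn2 1 v)).trans (hcast _ _)
    exact eq_of_heq (hu.symm.trans ((heq_of_eq e2).trans hv))
  -- pull 1 (a*b*c) (lamhat a b c) is lam a b c, up to cast
  have hlh : ∀ a b c : G, HEq (pull 1 (a * b * c) (lamhat a b c)) (lam a b c) := by
    intro a b c
    exact (hcast _ _).symm.trans (heq_of_eq (hlamhat a b c))
  constructor
  · intro a b c d
    apply pinj (a * b * c * d)
    rw [map_mul, map_mul, map_mul]
    apply eq_of_heq
    -- term 1: pull 1 X (θ a (lamhat b c d)) ≅ push a (b*c*d) (lam b c d)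
    have E1 : HEq (pull 1 (a * b * c * d) (θ a (lamhat b c d)))
        (push a (b * c * d) (lam b c d)) := by
      refine HEq.trans (hpull2 1 (show a * b * c * d = a * (b * c * d) by
        simp [mul_assoc]) _) ?_
      refine HEq.trans ((hcast _ _).symm.trans
        (heq_of_eq (h3 1 a (b * c * d) (θ a (lamhat b c d))).symm)) ?_
      refine HEq.trans (hpullc (b * c * d)
        (show (1 : G) * a = a * 1 by rw [one_mul, mul_one]) _ _
        ((hcast _ _).symm.trans ((heq_of_eq (hθ a (lamhat b c d))).trans
          (hcast _ _)))) ?_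
      refine HEq.trans (heq_of_eq (h2 a 1 (b * c * d) (lamhat b c d))) ?_
      refine HEq.trans (hcast _ _) ?_
      exact hpushc a (one_mul (b * c * d)) _ _ (hlh b c d)
    -- term 2
    have E2 : HEq (pull 1 (a * b * c * d) (lamhat a (b * c) d))
        (lam a (b * c) d) := by
      refine HEq.trans (hpull2 1 (show a * b * c * d = a * (b * c) * d by
        simp [mul_assoc]) _) ?_
      exact hlh a (b * c) d
    -- term 3: pull 1 X (lamhat a b c) ≅ pull (a*b*c) d (lam a b c)
    have E3 : HEq (pull 1 (a * b * c * d) (lamhat a b c))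
        (pull (a * b * c) d (lam a b c)) := by
      refine HEq.trans ((hcast _ _).symm.trans
        (heq_of_eq (h3 1 (a * b * c) d (lamhat a b c)).symm)) ?_
      exact hpullc d (one_mul (a * b * c)) _ _ (hlh a b c)
    -- term 4
    have E4 : HEq (pull 1 (a * b * c * d) (lamhat a b (c * d)))
        (lam a b (c * d)) := by
      refine HEq.trans (hpull2 1 (show a * b * c * d = a * b * (c * d) by
        simp [mul_assoc]) _) ?_
      exact hlh a b (c * d)
    -- term 5
    have E5 : HEq (pull 1 (a * b * c * d) (lamhat (a * b) c d))
        (lam (a * b) c d) := hlh (a * b) c d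
    have hXl : (1 : G) * (a * b * c * d) = a * b * c * d := one_mul _
    have e1 : a * (b * c * d) = a * b * c * d := by simp [mul_assoc]
    have e2 : a * (b * c) * d = a * b * c * d := by simp [mul_assoc]
    have e3 : a * b * (c * d) = a * b * c * d := by simp [mul_assoc]
    have E1' : HEq (pull 1 (a * b * c * d) (θ a (lamhat b c d)))
        (fcast A e1 (push a (b * c * d) (lam b c d))) :=
      E1.trans (hcast e1 _).symm
    have E2' : HEq (pull 1 (a * b * c * d) (lamhat a (b * c) d))
        (fcast A e2 (lam a (b * c) d)) := E2.trans (hcast e2 _).symm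
    have E4' : HEq (pull 1 (a * b * c * d) (lamhat a b (c * d)))
        (fcast A e3 (lam a b (c * d))) := E4.trans (hcast e3 _).symm
    exact (hmulc hXl _ _ _ _ (hmulc hXl _ _ _ _ E1' E2') E3).trans
      ((heq_of_eq (hcoc a b c d)).trans (hmulc hXl _ _ _ _ E4' E5).symm)
  · intro a b c habc
    apply pinj (a * b * c)
    apply eq_of_heq
    have : HEq (pull 1 (a * b * c) (lamhat a b c)) (1 : A (a * b * c)) := by
      rw [← hnormlam a b c habc]
      exact hlh a b c
    refine this.trans ?_
    refine HEq.trans (honec (one_mul (a * b * c)).symm) ?_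
    exact heq_of_eq (map_one (pull 1 (a * b * c))).symm
end
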